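/- arXiv:2504.18840 — 4 statements merged into one kernel-verified Lean document; each statement's English description precedes it below -/
import Mathlib

section
/- Let E be a real inner product space, let p_i, p_j ∈ E with d = ‖p_i − p_j‖, and let Δ be a real number with 0 < Δ < d. Define the shifted point p̃_j = p_j + ((2Δ − d)/d) · (p_i − p_j). Then every q ∈ E with ‖q − p_i‖ ≤ ‖q − p̃_j‖ satisfies ‖q − p_j‖ ≥ Δ. -/
/-! The bisector half-space of `p_i` and `p̃_j` is the half-space
`⟪q - p_j, p_i - p_j⟫ ≥ Δ ‖p_i - p_j‖`: `p̃_j` is placed on the ray from `p_j` through `p_i` so that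
the midpoint of `p_i` and `p̃_j` is at distance `Δ` from `p_j`. Cauchy–Schwarz then gives
`‖q - p_j‖ ≥ Δ`. -/

open RealInnerProductSpace

theorem mul_norm_sq_le_inner_of_norm_sub_le_norm_sub_smul {E : Type*} [NormedAddCommGroup E]
    [InnerProductSpace ℝ E] {u v : E} {c : ℝ} (hc : c < 1) (h : ‖v - u‖ ≤ ‖v - c • u‖) :
    (1 + c) / 2 * ‖u‖ ^ 2 ≤ ⟪v, u⟫ := by
  have hsq : ‖v - u‖ ^ 2 ≤ ‖v - c • u‖ ^ 2 := pow_le_pow_left₀ (norm_nonneg _) h 2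
  rw [norm_sub_sq_real, norm_sub_sq_real, real_inner_smul_right, norm_smul, mul_pow,
    Real.norm_eq_abs, sq_abs] at hsq
  -- `hsq` reads `2 (1 - c) ⟪v, u⟫ ≥ (1 - c) (1 + c) ‖u‖²`; cancel the positive factor `1 - c`.
  have hfactor : 0 < 1 - c := sub_pos.mpr hc
  nlinarith

/-- with `d = ‖p_i − p_j‖`, `0 < Δ < d` and the shifted point
`p̃_j = p_j + ((2Δ − d)/d) • (p_i − p_j)`, every point `q` of the bisector
half-space `{q : ‖q − p_i‖ ≤ ‖q − p̃_j‖}` satisfies `‖q − p_j‖ ≥ Δ`. -/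
theorem bisector_halfspace_clearance
    {E : Type*} [NormedAddCommGroup E] [InnerProductSpace ℝ E]
    (pi pj : E) (Δ : ℝ) (hΔ : 0 < Δ) (hΔlt : Δ < ‖pi - pj‖)
    (ptilde : E) (hptilde : ptilde = pj + ((2 * Δ - ‖pi - pj‖) / ‖pi - pj‖) • (pi - pj)) :
    ∀ q : E, ‖q - pi‖ ≤ ‖q - ptilde‖ → Δ ≤ ‖q - pj‖ := by
  intro q hq
  set d := ‖pi - pj‖
  set c := (2 * Δ - d) / d with hc_def
  have hd : 0 < d := hΔ.trans hΔlt
  have hc : c < 1 := by rw [div_lt_one hd]; linarith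
  have hmid : (1 + c) / 2 * d ^ 2 = Δ * d := by rw [hc_def]; field_simp; ring
  have hq' : ‖(q - pj) - (pi - pj)‖ ≤ ‖(q - pj) - c • (pi - pj)‖ := by
    rwa [sub_sub_sub_cancel_right, sub_sub, ← hptilde]
  have hinner : Δ * d ≤ ⟪q - pj, pi - pj⟫ :=
    hmid ▸ mul_norm_sq_le_inner_of_norm_sub_le_norm_sub_smul hc hq'
  exact le_of_mul_le_mul_right (hinner.trans (real_inner_le_norm _ _)) hd
end

section
/- Let E be a real inner product space, p_i, p_j ∈ E with p_i ≠ p_j, d = ‖p_j − p_i‖, and ε ≥ 1. Then every q ∈ E satisfying ⟪q − p_i, p_j − p_i⟫ < d²/ε satisfies ‖q − p_j‖ > d(1 − 1/ε). In particular, for ε = 2, every point of the cell is at distance strictly greater than d/2 from the neighbor p_j. -/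
open scoped RealInnerProductSpace

theorem lt_norm_sub_of_inner_sub_lt_mul {E : Type*} [NormedAddCommGroup E]
    [InnerProductSpace ℝ E] {a b q : E} {r : ℝ} (h : ⟪q - a, b - a⟫ < ‖b - a‖ * r) :
    ‖b - a‖ - r < ‖q - b‖ := by
  have hsplit : ⟪b - q, b - a⟫ = ‖b - a‖ ^ 2 - ⟪q - a, b - a⟫ := by
    rw [show b - q = (b - a) - (q - a) by abel, inner_sub_left, real_inner_self_eq_norm_sq]
  have hcs : ⟪b - q, b - a⟫ ≤ ‖q - b‖ * ‖b - a‖ := by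
    rw [norm_sub_rev q b]
    exact real_inner_le_norm _ _
  have hpos : 0 < ‖b - a‖ * (‖q - b‖ - (‖b - a‖ - r)) := by nlinarith
  exact sub_pos.mp (pos_of_mul_pos_right hpos (norm_nonneg _))

theorem cwvd_halfspace_clearance_general
    {E : Type*} [NormedAddCommGroup E] [InnerProductSpace ℝ E]
    (pi pj : E) (d : ℝ) (hd : d = ‖pj - pi‖)
    (ε : ℝ) :
    (∀ q : E, (inner ℝ (q - pi) (pj - pi) : ℝ) < d ^ 2 / ε → d * (1 - 1 / ε) < ‖q - pj‖) ∧
      (ε = 2 → ∀ q : E, (inner ℝ (q - pi) (pj - pi) : ℝ) < d ^ 2 / ε → d / 2 < ‖q - pj‖) := by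
  have clearance : ∀ q : E, (inner ℝ (q - pi) (pj - pi) : ℝ) < d ^ 2 / ε →
      d * (1 - 1 / ε) < ‖q - pj‖ := by
    intro q hq
    subst hd
    rw [show ‖pj - pi‖ ^ 2 / ε = ‖pj - pi‖ * (‖pj - pi‖ / ε) by ring] at hq
    convert lt_norm_sub_of_inner_sub_lt_mul hq using 1
    ring
  refine ⟨clearance, fun hε q hq => ?_⟩
  have h := clearance q hq
  rw [hε] at h
  linarith

/-- clearance bound for the CWVD half-space. With `d = ‖p_j − p_i‖`
and `ε ≥ 1`, every `q` with `⟪q − p_i, p_j − p_i⟫ < d²/ε` satisfies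
`‖q − p_j‖ > d(1 − 1/ε)`; in particular for `ε = 2` every such point is at
distance strictly greater than `d/2` from `p_j`. -/
theorem cwvd_halfspace_clearance
    {E : Type*} [NormedAddCommGroup E] [InnerProductSpace ℝ E]
    (pi pj : E) (hne : pi ≠ pj) (d : ℝ) (hd : d = ‖pj - pi‖)
    (ε : ℝ) (hε : 1 ≤ ε) :
    (∀ q : E, (inner ℝ (q - pi) (pj - pi) : ℝ) < d ^ 2 / ε → d * (1 - 1 / ε) < ‖q - pj‖) ∧
      (ε = 2 → ∀ q : E, (inner ℝ (q - pi) (pj - pi) : ℝ) < d ^ 2 / ε → d / 2 < ‖q - pj‖) :=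
  cwvd_halfspace_clearance_general pi pj d hd ε
end

section
/- Let E be a real normed vector space, let A ⊆ E be convex, let p₀, c ∈ A, and let k > 0. Define p : ℝ → E by p(t) = c + e^{−kt}(p₀ − c). Then: (i) p(0) = p₀; (ii) p is differentiable with p′(t) = −k (p(t) − c) for all t (so p solves the Lloyd-based control law ṗ = −k_p (p − c)); (iii) p(t) ∈ A for all t ≥ 0; (iv) ‖p(t) − c‖ = e^{−kt} ‖p₀ − c‖ for all t ≥ 0, so p(t) → c as t → ∞. Moreover, if o ∈ E and Δ ≥ 0 are such that ‖q − o‖ ≥ Δ for every q ∈ A, then ‖p(t) − o‖ ≥ Δ for all t ≥ 0, i.e., collision with the point o (with clearance Δ) is avoided at every instant of time. -/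
open Filter

/-- Safety, Theorem 1 of the paper: the solution
`p(t) = c + e^{−kt}(p₀ − c)` of the Lloyd control law `ṗ = −k(p − c)` starts at
`p₀`, stays in the convex cell `A` containing `p₀` and `c`, converges
exponentially to the centroid `c`, and keeps any clearance `Δ` from a point `o`
that the whole cell `A` keeps. -/
theorem lloyd_flow_safety
    {E : Type*} [NormedAddCommGroup E] [NormedSpace ℝ E]
    (A : Set E) (hA : Convex ℝ A) (p₀ c : E) (hp₀ : p₀ ∈ A) (hc : c ∈ A)
    (k : ℝ) (hk : 0 < k)
    (p : ℝ → E) (hp : ∀ t, p t = c + Real.exp (-k * t) • (p₀ - c)) :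
    p 0 = p₀ ∧
      (∀ t : ℝ, HasDerivAt p (-(k • (p t - c))) t) ∧
      (∀ t : ℝ, 0 ≤ t → p t ∈ A) ∧
      (∀ t : ℝ, 0 ≤ t → ‖p t - c‖ = Real.exp (-k * t) * ‖p₀ - c‖) ∧
      Tendsto p atTop (nhds c) ∧
      (∀ (o : E) (Δ : ℝ), 0 ≤ Δ → (∀ q ∈ A, Δ ≤ ‖q - o‖) →
        ∀ t : ℝ, 0 ≤ t → Δ ≤ ‖p t - o‖) := by
  have hmem : ∀ t : ℝ, 0 ≤ t → p t ∈ A := by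
    intro t ht
    rw [hp]
    have h1 : Real.exp (-k * t) ≤ 1 := by
      apply Real.exp_le_one_iff.mpr
      nlinarith
    have h0 : 0 ≤ Real.exp (-k * t) := (Real.exp_pos _).le
    have := hA hc hp₀ (by linarith : (0:ℝ) ≤ 1 - Real.exp (-k * t)) h0 (by ring)
    convert this using 1
    module
  refine ⟨by rw [hp]; simp, ?_, hmem, ?_, ?_, ?_⟩
  · intro t
    have h1 : HasDerivAt (fun t : ℝ => Real.exp (-k * t)) (-k * Real.exp (-k * t)) t := by
      have := ((hasDerivAt_id t).const_mul (-k)).exp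
      simpa [mul_comm] using this
    have h2 : HasDerivAt (fun t : ℝ => c + Real.exp (-k * t) • (p₀ - c))
        ((-k * Real.exp (-k * t)) • (p₀ - c)) t :=
      (h1.smul_const (p₀ - c)).const_add c
    have h3 : HasDerivAt p ((-k * Real.exp (-k * t)) • (p₀ - c)) t := by
      apply HasDerivAt.congr_of_eventuallyEq h2 (Filter.Eventually.of_forall fun s => hp s)
    convert h3 using 1
    rw [hp]
    module
  · intro t ht
    rw [hp]
    simp [norm_smul, abs_of_pos (Real.exp_pos _)]
  · have : Tendsto (fun t : ℝ => Real.exp (-k * t)) atTop (nhds 0) := by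
      apply Real.tendsto_exp_atBot.comp
      have : Tendsto (fun t : ℝ => k * t) atTop atTop :=
        Tendsto.const_mul_atTop hk tendsto_id
      exact (tendsto_neg_atBot_iff.mpr this).congr fun x => by ring
    have h := (this.smul_const (p₀ - c)).const_add c
    simp only [zero_smul, add_zero] at h
    exact h.congr fun t => (hp t).symm
  · intro o Δ hΔ hclear t ht
    exact hclear _ (hmem t ht)
end

section
/- Let E be a real normed vector space, let F ⊆ E be convex, let p₀, c ∈ F, and let k > 0. Define p : ℝ → E by p(t) = c + e^{−kt}(p₀ − c). Suppose J is a finite index set and for each j ∈ J there are p_j ∈ E and Γ_j > 0 such that F ⊆ {q ∈ E : ‖q − p_j‖ ≤ Γ_j}. Then for all t ≥ 0 and all j ∈ J, ‖p(t) − p_j‖ ≤ Γ_j; i.e., the proximity (flocking) constraints are maintained at every instant of time. If moreover every point of F is at distance at least Δ ≥ 0 from a given point o ∈ E, then ‖p(t) − o‖ ≥ Δ for all t ≥ 0, so safety is simultaneously preserved. -/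
/-- Proximity maintenance, Theorem 2 of the paper: if the convex
cell `F` containing `p₀` and `c` is contained in every proximity ball
`{q : ‖q − p_j‖ ≤ Γ_j}`, then the solution `p(t) = c + e^{−kt}(p₀ − c)` of the
Lloyd control law satisfies `‖p(t) − p_j‖ ≤ Γ_j` for all `t ≥ 0` and all `j`;
moreover any clearance `Δ` from a point `o` kept by all of `F` is kept by `p(t)`. -/
theorem lloyd_flow_proximity_maintenance
    {E : Type*} [NormedAddCommGroup E] [NormedSpace ℝ E]
    (F : Set E) (hF : Convex ℝ F) (p₀ c : E) (hp₀ : p₀ ∈ F) (hc : c ∈ F)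
    (k : ℝ) (hk : 0 < k)
    (p : ℝ → E) (hp : ∀ t, p t = c + Real.exp (-k * t) • (p₀ - c))
    {ι : Type*} [Fintype ι] (pj : ι → E) (Γ : ι → ℝ) (hΓ : ∀ j, 0 < Γ j)
    (hsub : ∀ j, F ⊆ {q : E | ‖q - pj j‖ ≤ Γ j}) :
    (∀ t : ℝ, 0 ≤ t → ∀ j, ‖p t - pj j‖ ≤ Γ j) ∧
      (∀ (o : E) (Δ : ℝ), 0 ≤ Δ → (∀ q ∈ F, Δ ≤ ‖q - o‖) →
        ∀ t : ℝ, 0 ≤ t → Δ ≤ ‖p t - o‖) := by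
  have hmem : ∀ t : ℝ, 0 ≤ t → p t ∈ F := by
    intro t ht
    have hθ : Real.exp (-k * t) ≤ 1 := by
      apply Real.exp_le_one_iff.mpr
      nlinarith
    have hθ0 : 0 ≤ Real.exp (-k * t) := (Real.exp_pos _).le
    have := hF hp₀ hc hθ0 (by linarith : (0:ℝ) ≤ 1 - Real.exp (-k * t)) (by ring)
    have heq : p t = Real.exp (-k * t) • p₀ + (1 - Real.exp (-k * t)) • c := by
      rw [hp t]; module
    rwa [heq]
  exact ⟨fun t ht j => hsub j (hmem t ht),
    fun o Δ _ h t ht => h _ (hmem t ht)⟩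
end
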